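/- Let n ≥ 2 and let b_{n,m} denote the coefficient of x^m in the n-th Nekrasov–Okounkov polynomial Q_n(x). Then b_{n,n−1}^2 > b_{n,n−2} · b_{n,n}. -/

import Mathlib

open Finset Polynomial

/-- The recursively defined polynomials `P_n^{g,h}` attached to arithmetic functions
`g, h : ℕ → ℝ` (values at `0` are irrelevant): `P_0 = 1` and
`P_n(x) = (x / h(n)) · Σ_{k=1}^n g(k) · P_{n-k}(x)`. -/
noncomputable def Ppoly (g h : ℕ → ℝ) : ℕ → Polynomial ℝ
  | 0 => 1
  | (n+1) => Polynomial.C (h (n+1))⁻¹ * Polynomial.X *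
      ∑ k ∈ Finset.range (n+1), Polynomial.C (g (k+1)) * Ppoly g h (n - k)
  termination_by n => n
  decreasing_by all_goals (simp_wf; try omega)

/-- `A_{n,m}^{g,h}`: the coefficient of `x^m` in `(∏_{k=1}^n h(k)) · P_n^{g,h}(x)`. -/
noncomputable def Acoeff (g h : ℕ → ℝ) (n m : ℕ) : ℝ :=
  (∏ k ∈ Finset.Icc 1 n, h k) * (Ppoly g h n).coeff m

/-- `h` extended by the convention `h(0) := 0`. -/
noncomputable def hExt (h : ℕ → ℝ) (n : ℕ) : ℝ := if n = 0 then 0 else h n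

/-- `h_m(n) = ∏_{k=0}^{m-1} h(n-k)` (with the convention `h(0) := 0`). -/
noncomputable def hIter (h : ℕ → ℝ) (m n : ℕ) : ℝ :=
  ∏ k ∈ Finset.range m, hExt h (n - k)

/-- Helper for `H(μ,n)`: defined on reversed compositions, peeling off the head
(which is the last part `μ_{r+1}` of the original composition). -/
noncomputable def Hrev (h : ℕ → ℝ) : List ℕ → ℕ → ℝ
  | [], _ => 1
  | (a :: t), n =>
      if n < (a :: t).sum + (a :: t).length then 0
      else ∑ k ∈ Finset.Ico ((a :: t).sum + (a :: t).length - 1) n,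
        hIter h a k * Hrev h t (k - a)

/-- `H(μ, n)` for a composition `μ` (a list of positive integers): `H(ε,n) = 1`,
`H(μ,n) = Σ_{k=|μ|+ℓ(μ)-1}^{n-1} h_{μ_{r+1}}(k) · H((μ_1,…,μ_r), k - μ_{r+1})`
if `n ≥ |μ| + ℓ(μ)`, and `0` otherwise. -/
noncomputable def HFun (h : ℕ → ℝ) (μ : List ℕ) (n : ℕ) : ℝ := Hrev h μ.reverse n

/-- `𝓗(μ, n) = Σ_{λ ∈ Orb(μ)} H(λ, n)`: sum over all distinct rearrangements of `μ`. -/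
noncomputable def HCal (h : ℕ → ℝ) (μ : List ℕ) (n : ℕ) : ℝ :=
  ∑ lam ∈ μ.permutations.toFinset, HFun h lam n

/-- `𝓖(μ) = ∏_{k=1}^{ℓ(μ)} g(μ_k + 1)`. -/
noncomputable def GCal (g : ℕ → ℝ) (μ : List ℕ) : ℝ := (μ.map (fun p => g (p + 1))).prod

/-- The `n`-th Nekrasov–Okounkov polynomial, defined (via the hook length formula)
as `Q_n(x) = P_n^{σ,id}(x - 1)` where `σ(k) = Σ_{d ∣ k} d`. -/
noncomputable def NekrasovOkounkov (n : ℕ) : Polynomial ℝ :=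
  (Ppoly (fun k => ((∑ d ∈ Nat.divisors k, d : ℕ) : ℝ)) (fun k => (k : ℝ)) n).comp
    (Polynomial.X - 1)

/-! For `h = id` and `g(1) = 1` the recursion determines the top three coefficients of
`P_n = P_n^{g,id}` in closed form: `n! [x^n] P_n = 1`, `n! [x^{n-1}] P_n = g(2) n(n-1)/2` and
`n! [x^{n-2}] P_n = g(3) n(n-1)(n-2)/3 + g(2)² n(n-1)(n-2)(n-3)/8`. Substituting `x - 1` is the
Taylor shift at `-1`, which mixes only these three coefficients into the top three of `Q_n`.
With `σ(2) = 3`, `σ(3) = 4` and `n = p + 2`, the inequality becomes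
`6 (3p+1)² (p+2) > (27p² - 31p - 24)(p+1)`, and the difference is
`27p³ + 148p² + 133p + 36 > 0`. -/

open Nat

section Recursion

variable (g h : ℕ → ℝ)

lemma Ppoly_succ (n : ℕ) :
    Ppoly g h (n + 1) =
      C (h (n + 1))⁻¹ * X * ∑ k ∈ range (n + 1), C (g (k + 1)) * Ppoly g h (n - k) := by
  rw [Ppoly]

lemma natDegree_Ppoly_le (n : ℕ) : (Ppoly g h n).natDegree ≤ n := by
  induction n using Nat.strong_induction_on with
  | _ n ih =>
    cases n with
    | zero => simp [Ppoly]
    | succ n =>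
      rw [Ppoly_succ]
      have hX : (C (h (n + 1))⁻¹ * X).natDegree ≤ 1 :=
        (natDegree_C_mul_le _ _).trans (by simp)
      have hsum : (∑ k ∈ range (n + 1), C (g (k + 1)) * Ppoly g h (n - k)).natDegree ≤ n :=
        natDegree_sum_le_of_forall_le _ _ fun k _ =>
          (natDegree_C_mul_le _ _).trans ((ih (n - k) (by omega)).trans (by omega))
      exact natDegree_mul_le.trans (by omega)

lemma coeff_Ppoly_of_lt {n m : ℕ} (hm : n < m) : (Ppoly g h n).coeff m = 0 :=
  coeff_eq_zero_of_natDegree_lt ((natDegree_Ppoly_le g h n).trans_lt hm)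

lemma coeff_zero_Ppoly_succ (n : ℕ) : (Ppoly g h (n + 1)).coeff 0 = 0 := by
  simp [Ppoly_succ, mul_coeff_zero]

/-- The terms with `k > j` vanish because `deg P_{m+j-k} < m`. -/
lemma coeff_succ_Ppoly_add_succ (m j : ℕ) :
    (Ppoly g h (m + j + 1)).coeff (m + 1) =
      (h (m + j + 1))⁻¹ *
        ∑ k ∈ range (j + 1), g (k + 1) * (Ppoly g h (m + j - k)).coeff m := by
  rw [Ppoly_succ, mul_assoc, coeff_C_mul, coeff_X_mul, finsetSum_coeff]
  simp only [coeff_C_mul]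
  congr 1
  refine (sum_subset (range_subset_range.2 (by omega)) fun k hk hkj => ?_).symm
  simp only [mem_range] at hk hkj
  rw [coeff_Ppoly_of_lt g h (by omega), mul_zero]

end Recursion

section IdDenominators

variable {g : ℕ → ℝ}

lemma coeff_Ppoly_self (hg : g 1 = 1) (n : ℕ) : (Ppoly g (↑) n).coeff n = (n ! : ℝ)⁻¹ := by
  induction n with
  | zero => simp [Ppoly]
  | succ n ih =>
    rw [coeff_succ_Ppoly_add_succ g _ n 0]
    simp [ih, hg, factorial_succ, mul_comm]

lemma coeff_Ppoly_succ (hg : g 1 = 1) (n : ℕ) :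
    (Ppoly g (↑) (n + 1)).coeff n = g 2 * n / (2 * n !) := by
  induction n with
  | zero => simp [coeff_zero_Ppoly_succ]
  | succ n ih =>
    rw [coeff_succ_Ppoly_add_succ g _ n 1]
    simp only [sum_range_succ, sum_range_zero, zero_add, Nat.add_sub_cancel, Nat.sub_zero]
    rw [ih, coeff_Ppoly_self hg, hg, factorial_succ]
    push_cast
    field_simp
    ring

lemma coeff_Ppoly_add_two (hg : g 1 = 1) (n : ℕ) :
    (Ppoly g (↑) (n + 2)).coeff n = (g 3 * n / 3 + g 2 ^ 2 * n * (n - 1) / 8) / n ! := by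
  induction n with
  | zero => simp [coeff_zero_Ppoly_succ]
  | succ n ih =>
    rw [show n + 1 + 2 = n + 2 + 1 by ring, coeff_succ_Ppoly_add_succ g _ n 2]
    simp only [sum_range_succ, sum_range_zero, zero_add, Nat.sub_zero,
      show n + 2 - 1 = n + 1 by omega, show n + 2 - 2 = n by omega]
    rw [ih, coeff_Ppoly_succ hg, coeff_Ppoly_self hg, hg, factorial_succ]
    push_cast
    field_simp
    ring

end IdDenominators

lemma coeff_taylor_of_natDegree_le {R : Type*} [CommSemiring R] (r : R) {f : R[X]} {m k : ℕ}
    (hf : f.natDegree ≤ m + k) :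
    (taylor r f).coeff m =
      ∑ i ∈ range (k + 1), ((i + m).choose m : R) * f.coeff (i + m) * r ^ i := by
  have hdeg : (hasseDeriv m f).natDegree < k + 1 :=
    (natDegree_hasseDeriv_le f m).trans_lt (by omega)
  simp [taylor_coeff, eval_eq_sum_range' hdeg, hasseDeriv_coeff]

section Taylor

variable {g : ℕ → ℝ} (r : ℝ)

lemma coeff_taylor_Ppoly_self (hg : g 1 = 1) (n : ℕ) :
    (taylor r (Ppoly g (↑) n)).coeff n = (n ! : ℝ)⁻¹ := by
  rw [coeff_taylor_of_natDegree_le r (k := 0) (natDegree_Ppoly_le _ _ n)]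
  simp [coeff_Ppoly_self hg]

lemma coeff_taylor_Ppoly_succ (hg : g 1 = 1) (n : ℕ) :
    (taylor r (Ppoly g (↑) (n + 1))).coeff n = (g 2 * n / 2 + r) / n ! := by
  rw [coeff_taylor_of_natDegree_le r (k := 1) (natDegree_Ppoly_le _ _ (n + 1))]
  simp only [sum_range_succ, sum_range_zero, zero_add, one_add, Nat.choose_self,
    Nat.choose_succ_self_right, coeff_Ppoly_succ hg, coeff_Ppoly_self hg, factorial_succ]
  push_cast
  field_simp

lemma coeff_taylor_Ppoly_add_two (hg : g 1 = 1) (n : ℕ) :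
    (taylor r (Ppoly g (↑) (n + 2))).coeff n =
      (g 3 * n / 3 + g 2 ^ 2 * n * (n - 1) / 8 + g 2 * (n + 1) * r / 2 + r ^ 2 / 2) / n ! := by
  rw [coeff_taylor_of_natDegree_le r (k := 2) (natDegree_Ppoly_le _ _ (n + 2))]
  have hchoose : ((n + 2).choose n : ℝ) = (n + 2) * (n + 1) / 2 := by
    rw [Nat.choose_symm_add, Nat.cast_choose_two]; push_cast; ring
  simp only [sum_range_succ, sum_range_zero, zero_add, one_add, Nat.choose_self,
    Nat.choose_succ_self_right, show 2 + n = n + 2 by ring, hchoose, coeff_Ppoly_add_two hg,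
    coeff_Ppoly_succ hg, coeff_Ppoly_self hg, factorial_succ]
  push_cast
  field_simp
  ring

end Taylor

lemma NekrasovOkounkov_eq_taylor (n : ℕ) :
    NekrasovOkounkov n =
      taylor (-1) (Ppoly (fun k => ((∑ d ∈ Nat.divisors k, d : ℕ) : ℝ)) (↑) n) := by
  rw [NekrasovOkounkov, taylor_apply, map_neg, C_1, sub_eq_add_neg]

/-- `b_{n,n-1}² > b_{n,n-2} · b_{n,n}` for the Nekrasov–Okounkov polynomials, `n ≥ 2`. -/
theorem NO_top_log_concavity (n : ℕ) (hn : 2 ≤ n) :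
    ((NekrasovOkounkov n).coeff (n - 1)) ^ 2 >
      (NekrasovOkounkov n).coeff (n - 2) * (NekrasovOkounkov n).coeff n := by
  obtain ⟨p, rfl⟩ : ∃ p, n = p + 2 := ⟨n - 2, by omega⟩
  rw [NekrasovOkounkov_eq_taylor, show p + 2 - 1 = p + 1 by omega, Nat.add_sub_cancel]
  set σ : ℕ → ℝ := fun k => ((∑ d ∈ Nat.divisors k, d : ℕ) : ℝ)
  have hσ1 : σ 1 = 1 := by simp [σ]
  have hσ2 : σ 2 = 3 := by norm_num [σ, Nat.prime_two.sum_divisors]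
  have hσ3 : σ 3 = 4 := by norm_num [σ, Nat.prime_three.sum_divisors]
  -- `p + 2` is `p + 1 + 1` only up to defeq, so `rw` needs the instance spelled out.
  have hb1 : (taylor (-1) (Ppoly σ (↑) (p + 2))).coeff (p + 1) = _ :=
    coeff_taylor_Ppoly_succ (-1) hσ1 (p + 1)
  rw [coeff_taylor_Ppoly_add_two (-1) hσ1, hb1, coeff_taylor_Ppoly_self (-1) hσ1, hσ2, hσ3,
    gt_iff_lt, ← sub_pos]
  convert (by positivity : (0 : ℝ) <
    (27 * p ^ 3 + 148 * p ^ 2 + 133 * p + 36) / (24 * (p + 1) ^ 2 * (p + 2) * p ! ^ 2)) using 1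
  push_cast [factorial_succ]
  field_simp
  ring
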